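/- Under Assumption 1, for every trajectory-induced signal ς and every n ∈ ℤ≥0, if two atomic propositions p, p' both receive observation in {Z, E} in slice n of the chopped signal ⟨ς⟩_τ, then p = p'. -/
import Mathlib

/-- The four observation patterns of an atomic proposition on a time interval. -/
inductive Obs where
  | A | Z | E | N
deriving DecidableEq

/-- `obsOf f a b o` : the truth pattern of the (time-indexed) property `f`
on the closed interval `[a, b]` is classified by the observation `o`. -/
def obsOf (f : ℝ → Prop) (a b : ℝ) : Obs → Prop
  | .A => ∀ t, a ≤ t → t ≤ b → f t
  | .N => ∀ t, a ≤ t → t ≤ b → ¬ f t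
  | .Z => ∃ c, a ≤ c ∧ c < b ∧ (∀ t, a ≤ t → t ≤ c → f t) ∧ (∀ t, c < t → t ≤ b → ¬ f t)
  | .E => ∃ c, a ≤ c ∧ c < b ∧ (∀ t, a ≤ t → t ≤ c → ¬ f t) ∧ (∀ t, c < t → t ≤ b → f t)

/-- Assumption 1 of the paper: (1) no double boundary crossing of any AP region
within time `τ`, and (2) at most one atomic proposition changes value across any
interval of length `τ`. -/
def Assumption1 {AP : Type} (ς : ℝ → AP → Bool) (τ : ℝ) : Prop :=
  (∀ (p : AP) (t : ℝ), 0 ≤ t → ∀ t', 0 ≤ t' → t' ≤ τ →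
      ς t p = ς (t + t') p → ∀ t'', 0 ≤ t'' → t'' ≤ t' → ς t p = ς (t + t'') p) ∧
  (∀ (p p' : AP) (t : ℝ), 0 ≤ t →
      ς t p ≠ ς (t + τ) p → ς t p' ≠ ς (t + τ) p' → p = p')

lemma ZE_flip {AP : Type} (ς : ℝ → AP → Bool) (a b : ℝ) (hab : a ≤ b) (p : AP) (o : Obs)
    (ho : obsOf (fun t => ς t p = true) a b o) (hZE : o = .Z ∨ o = .E) :
    ς a p ≠ ς b p := by
  rcases hZE with rfl | rfl
  · obtain ⟨c, hac, hcb, h1, h2⟩ := ho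
    have ha : ς a p = true := h1 a le_rfl hac
    have hb : ¬ ς b p = true := h2 b hcb le_rfl
    simp [ha, Bool.not_eq_true] at hb ⊢
    simp [hb]
  · obtain ⟨c, hac, hcb, h1, h2⟩ := ho
    have ha : ¬ ς a p = true := h1 a le_rfl hac
    have hb : ς b p = true := h2 b hcb le_rfl
    simp [hb, Bool.not_eq_true] at ha ⊢
    simp [ha]

/-- Under Assumption 1, at most one atomic proposition can receive an
observation in `{Z, E}` on any given slice of the chopped signal. -/
theorem at_most_one_ZE {AP : Type} (ς : ℝ → AP → Bool) (τ : ℝ) (hτ : 0 < τ)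
    (h1 : Assumption1 ς τ) (n : ℕ) (p p' : AP) (o o' : Obs)
    (ho : obsOf (fun t => ς t p = true) ((n : ℝ) * τ) (((n : ℝ) + 1) * τ) o)
    (ho' : obsOf (fun t => ς t p' = true) ((n : ℝ) * τ) (((n : ℝ) + 1) * τ) o')
    (hZE : o = .Z ∨ o = .E) (hZE' : o' = .Z ∨ o' = .E) :
    p = p' := by
  have hab : (n : ℝ) * τ ≤ ((n : ℝ) + 1) * τ := by nlinarith
  have heq : ((n : ℝ) + 1) * τ = (n : ℝ) * τ + τ := by ring
  have h0 : (0 : ℝ) ≤ (n : ℝ) * τ := by positivity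
  have hp := ZE_flip ς _ _ hab p o ho hZE
  have hp' := ZE_flip ς _ _ hab p' o' ho' hZE'
  rw [heq] at hp hp'
  exact h1.2 p p' _ h0 hp hp'
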